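/- arXiv:1012.2798 — 4 statements merged into one kernel-verified Lean document; each statement's English description precedes it below -/
import Mathlib

section
/- Bound of the mixing coefficient via the φ-mixing coefficient: for all q ≥ p ≥ 1, ϖ_{q,p}(𝓖,𝓗) ≤ 2^{1 + 1/p}(φ(𝓖,𝓗))^{1 − 1/p}. -/
open MeasureTheory Filter Set ProbabilityTheory
open scoped ENNReal NNReal Topology

noncomputable section

/-- The mixing coefficient `ϖ_{q,p}(𝓖,𝓗)`. -/
def varpi {Ω : Type*} {mΩ : MeasurableSpace Ω} (P : Measure Ω)
    (G H : MeasurableSpace Ω) (q p : ℝ≥0∞) : ℝ≥0∞ :=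
  ⨆ g : {g : Ω → ℝ // Measurable[H] g ∧ eLpNorm g q P ≤ 1},
    eLpNorm (fun ω => (P[g.1|G]) ω - ∫ x, g.1 x ∂P) p P

/-- `α(𝓖,𝓗) = ϖ_{∞,1}(𝓖,𝓗)/4`. -/
def alphaMix {Ω : Type*} {mΩ : MeasurableSpace Ω} (P : Measure Ω)
    (G H : MeasurableSpace Ω) : ℝ≥0∞ := varpi P G H ⊤ 1 / 4

/-- `ρ(𝓖,𝓗) = ϖ_{2,2}(𝓖,𝓗)`. -/
def rhoMix {Ω : Type*} {mΩ : MeasurableSpace Ω} (P : Measure Ω)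
    (G H : MeasurableSpace Ω) : ℝ≥0∞ := varpi P G H 2 2

/-- `φ(𝓖,𝓗) = ϖ_{∞,∞}(𝓖,𝓗)/2`. -/
def phiMix {Ω : Type*} {mΩ : MeasurableSpace Ω} (P : Measure Ω)
    (G H : MeasurableSpace Ω) : ℝ≥0∞ := varpi P G H ⊤ ⊤ / 2

/-- `ψ(𝓖,𝓗) = ϖ_{1,∞}(𝓖,𝓗)`. -/
def psiMix {Ω : Type*} {mΩ : MeasurableSpace Ω} (P : Measure Ω)
    (G H : MeasurableSpace Ω) : ℝ≥0∞ := varpi P G H 1 ⊤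

/-!
For an `𝓗`-simple function `g = ∑ᵢ cᵢ 𝟙_{Bᵢ}` one has `E[g|𝓖] - E g = ∑ᵢ cᵢ μᵢ` with
`μᵢ = P(Bᵢ|𝓖) - P(Bᵢ)`. Testing `ϖ_{∞,∞}` against the `±1`-valued functions `∑ᵢ εᵢ 𝟙_{Bᵢ}`
gives `∑ᵢ |μᵢ| ≤ ϖ_{∞,∞}` almost surely, while `E|μᵢ| ≤ 2 P(Bᵢ)`. Weighted Hölder with weights
`|μᵢ|` then yields `‖E[g|𝓖] - E g‖ₚ ≤ 2^{1/p} ϖ_{∞,∞}^{1-1/p} ‖g‖ₚ`, which passes to all of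
`L^p(𝓗)` by density since `g ↦ E[g|𝓖] - E g` is `2`-Lipschitz on `L^p`. As `ϖ_{∞,∞} = 2φ` and
`ϖ_{q,p} ≤ ϖ_{p,p}` for `q ≥ p`, this gives `ϖ_{q,p} ≤ 2 φ^{1-1/p}`.
-/

theorem ENNReal.rpow_sum_mul_le {ι : Type*} (s : Finset ι) (w f : ι → ℝ≥0∞) {r : ℝ}
    (hr : 1 ≤ r) :
    (∑ i ∈ s, w i * f i) ^ r ≤ (∑ i ∈ s, w i) ^ (r - 1) * ∑ i ∈ s, w i * f i ^ r := by
  have hr0 : 0 < r := by linarith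
  calc (∑ i ∈ s, w i * f i) ^ r
      ≤ ((∑ i ∈ s, w i) ^ (1 - r⁻¹) * (∑ i ∈ s, w i * f i ^ r) ^ r⁻¹) ^ r :=
        ENNReal.rpow_le_rpow (ENNReal.inner_le_weight_mul_Lp_of_nonneg s hr w f) hr0.le
    _ = (∑ i ∈ s, w i) ^ (r - 1) * ∑ i ∈ s, w i * f i ^ r := by
        rw [ENNReal.mul_rpow_of_nonneg _ _ hr0.le, ← ENNReal.rpow_mul, ← ENNReal.rpow_mul,
          sub_mul, inv_mul_cancel₀ hr0.ne', one_mul, ENNReal.rpow_one]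

theorem exists_simpleFunc_eLpNorm_sub_le {Ω : Type*} {H mΩ : MeasurableSpace Ω} {P : Measure Ω}
    (hH : H ≤ mΩ) {p : ℝ≥0∞} (hp_top : p ≠ ∞)
    {g : Ω → ℝ} (hg : StronglyMeasurable[H] g) (hg_lt : eLpNorm g p P < ∞) {ε : ℝ≥0∞}
    (hε : ε ≠ 0) : ∃ s : @SimpleFunc Ω H ℝ, eLpNorm (g - ⇑s) p P ≤ ε := by
  have hg_trim : MemLp g p (P.trim hH) :=
    ⟨hg.aestronglyMeasurable, by rwa [eLpNorm_trim hH hg]⟩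
  obtain ⟨s, hs, -⟩ :=
    @MemLp.exists_simpleFunc_eLpNorm_sub_lt _ H _ _ _ _ _ hg_trim hp_top _ hε
  exact ⟨s, (eLpNorm_trim hH (hg.sub s.stronglyMeasurable)).symm.trans_le hs.le⟩

def centeredCondExp {Ω : Type*} (m : MeasurableSpace Ω) {mΩ : MeasurableSpace Ω} (P : Measure Ω)
    (f : Ω → ℝ) : Ω → ℝ :=
  fun ω => P[f|m] ω - ∫ x, f x ∂P

section CenteredCondExp

variable {Ω : Type*} {m mΩ : MeasurableSpace Ω} {P : Measure Ω}

theorem aestronglyMeasurable_centeredCondExp (f : Ω → ℝ) :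
    AEStronglyMeasurable (centeredCondExp m P f) P :=
  integrable_condExp.aestronglyMeasurable.sub aestronglyMeasurable_const

theorem centeredCondExp_sub {f g : Ω → ℝ} (hf : Integrable f P) (hg : Integrable g P) :
    centeredCondExp m P (f - g) =ᵐ[P] centeredCondExp m P f - centeredCondExp m P g := by
  filter_upwards [condExp_sub hf hg m] with ω hω
  simp only [centeredCondExp, hω, Pi.sub_apply, integral_sub hf hg]
  ring

theorem centeredCondExp_sum_smul {ι : Type*} (s : Finset ι) (c : ι → ℝ) {f : ι → Ω → ℝ}
    (hf : ∀ i ∈ s, Integrable (f i) P) :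
    centeredCondExp m P (∑ i ∈ s, c i • f i)
      =ᵐ[P] ∑ i ∈ s, c i • centeredCondExp m P (f i) := by
  have hsmul : ∀ᵐ ω ∂P, ∀ i ∈ s, P[c i • f i|m] ω = c i * P[f i|m] ω := by
    refine (ae_ball_iff s.countable_toSet).2 fun i _ => ?_
    filter_upwards [condExp_smul (c i) (f i) m] with ω hω
    simp [hω]
  filter_upwards [condExp_finsetSum (fun i hi => (hf i hi).smul (c i)) m, hsmul] with ω hsum hω
  simp only [centeredCondExp, hsum, Finset.sum_apply, Pi.smul_apply, smul_eq_mul,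
    Finset.sum_congr rfl hω]
  rw [integral_finsetSum s fun i hi => (hf i hi).const_mul (c i)]
  simp only [integral_const_mul, mul_sub, Finset.sum_sub_distrib]

variable [IsProbabilityMeasure P]

theorem eLpNorm_centeredCondExp_le {p : ℝ≥0∞} (hp : 1 ≤ p) {f : Ω → ℝ}
    (hf : AEStronglyMeasurable f P) :
    eLpNorm (centeredCondExp m P f) p P ≤ 2 * eLpNorm f p P := by
  have hconst : eLpNorm (fun _ => ∫ x, f x ∂P) p P ≤ eLpNorm f p P := calc
    eLpNorm (fun _ => ∫ x, f x ∂P) p P = ‖∫ x, f x ∂P‖ₑ := by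
      simp [eLpNorm_const _ (zero_lt_one.trans_le hp).ne' (IsProbabilityMeasure.ne_zero P)]
    _ ≤ ∫⁻ x, ‖f x‖ₑ ∂P := enorm_integral_le_lintegral_enorm f
    _ = eLpNorm f 1 P := eLpNorm_one_eq_lintegral_enorm.symm
    _ ≤ eLpNorm f p P := eLpNorm_le_eLpNorm_of_exponent_le hp hf
  calc eLpNorm (centeredCondExp m P f) p P
      ≤ eLpNorm (P[f|m]) p P + eLpNorm (fun _ => ∫ x, f x ∂P) p P :=
        eLpNorm_sub_le integrable_condExp.aestronglyMeasurable aestronglyMeasurable_const hp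
    _ ≤ eLpNorm f p P + eLpNorm f p P := add_le_add (eLpNorm_condExp_le_eLpNorm f hp) hconst
    _ = 2 * eLpNorm f p P := (two_mul _).symm

theorem lintegral_enorm_centeredCondExp_indicator_le {B : Set Ω} (hB : MeasurableSet B) :
    ∫⁻ ω, ‖centeredCondExp m P (B.indicator fun _ => 1) ω‖ₑ ∂P ≤ 2 * P B := by
  have := eLpNorm_centeredCondExp_le (m := m) (P := P) le_rfl
    ((aestronglyMeasurable_const (b := (1 : ℝ))).indicator hB)
  simpa [eLpNorm_one_eq_lintegral_enorm, eLpNorm_indicator_const hB one_ne_zero ENNReal.one_ne_top]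
    using this

theorem eLpNorm_centeredCondExp_le_add_two_mul_eLpNorm_sub {p : ℝ≥0∞} (hp : 1 ≤ p)
    {f g : Ω → ℝ} (hf : Integrable f P) (hg : Integrable g P) :
    eLpNorm (centeredCondExp m P f) p P
      ≤ eLpNorm (centeredCondExp m P g) p P + 2 * eLpNorm (f - g) p P := calc
  eLpNorm (centeredCondExp m P f) p P
      = eLpNorm (centeredCondExp m P g + (centeredCondExp m P f - centeredCondExp m P g)) p P := by
        rw [add_sub_cancel]
  _ ≤ eLpNorm (centeredCondExp m P g) p P
        + eLpNorm (centeredCondExp m P f - centeredCondExp m P g) p P :=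
      eLpNorm_add_le (aestronglyMeasurable_centeredCondExp g)
        ((aestronglyMeasurable_centeredCondExp f).sub (aestronglyMeasurable_centeredCondExp g)) hp
  _ = eLpNorm (centeredCondExp m P g) p P + eLpNorm (centeredCondExp m P (f - g)) p P := by
      rw [eLpNorm_congr_ae (centeredCondExp_sub hf hg).symm]
  _ ≤ eLpNorm (centeredCondExp m P g) p P + 2 * eLpNorm (f - g) p P := by
      gcongr
      exact eLpNorm_centeredCondExp_le hp (hf.sub hg).aestronglyMeasurable

end CenteredCondExp

section Varpi

variable {Ω : Type*} {G H mΩ : MeasurableSpace Ω} {P : Measure Ω}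

theorem eLpNorm_centeredCondExp_le_varpi {q p : ℝ≥0∞} {g : Ω → ℝ} (hg : Measurable[H] g)
    (hgq : eLpNorm g q P ≤ 1) : eLpNorm (centeredCondExp G P g) p P ≤ varpi P G H q p :=
  le_iSup (fun g : {g : Ω → ℝ // Measurable[H] g ∧ eLpNorm g q P ≤ 1} =>
    eLpNorm (centeredCondExp G P g.1) p P) ⟨g, hg, hgq⟩

theorem ae_enorm_centeredCondExp_le_varpi_top {g : Ω → ℝ} (hg : Measurable[H] g)
    (hg1 : ∀ ω, ‖g ω‖ ≤ 1) : ∀ᵐ ω ∂P, ‖centeredCondExp G P g ω‖ₑ ≤ varpi P G H ⊤ ⊤ := by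
  have hg_top : eLpNorm g ⊤ P ≤ 1 := by
    simpa using eLpNorm_le_of_ae_bound (μ := P) (p := ⊤) (Eventually.of_forall hg1)
  filter_upwards [ae_le_eLpNormEssSup (μ := P) (f := centeredCondExp G P g)] with ω hω
  have hvarpi := eLpNorm_centeredCondExp_le_varpi (G := G) (p := ⊤) hg hg_top
  rw [eLpNorm_exponent_top] at hvarpi
  exact hω.trans hvarpi

theorem varpi_le_varpi_of_exponent_le [IsProbabilityMeasure P] (hH : H ≤ mΩ) {q q' : ℝ≥0∞}
    (p : ℝ≥0∞) (hqq' : q ≤ q') : varpi P G H q' p ≤ varpi P G H q p :=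
  iSup_le fun g => eLpNorm_centeredCondExp_le_varpi g.2.1
    ((eLpNorm_le_eLpNorm_of_exponent_le hqq' (g.2.1.mono hH le_rfl).aestronglyMeasurable).trans
      g.2.2)

end Varpi

section FiniteValued

variable {Ω ι : Type*} {G H mΩ : MeasurableSpace Ω} {P : Measure Ω} [Fintype ι] {k : Ω → ι}

theorem comp_eq_sum_smul_indicator (c : ι → ℝ) :
    c ∘ k = ∑ i, c i • (k ⁻¹' {i}).indicator fun _ => (1 : ℝ) := by
  classical
  ext ω
  simp [Set.indicator_apply]

variable [MeasurableSpace ι] [MeasurableSingletonClass ι]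

theorem lintegral_comp_eq_sum {f : ι → ℝ≥0∞} (hk : Measurable k) :
    ∫⁻ ω, f (k ω) ∂P = ∑ i, f i * P (k ⁻¹' {i}) := by
  rw [← lintegral_map (measurable_of_finite f) hk, lintegral_fintype]
  simp_rw [Measure.map_apply hk (measurableSet_singleton _)]

variable [IsProbabilityMeasure P]

theorem centeredCondExp_comp_ae_eq_sum (hk : Measurable k) (c : ι → ℝ) :
    centeredCondExp G P (c ∘ k)
      =ᵐ[P] ∑ i, c i • centeredCondExp G P ((k ⁻¹' {i}).indicator fun _ => 1) := by
  rw [comp_eq_sum_smul_indicator c]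
  exact centeredCondExp_sum_smul _ c fun i _ =>
    (integrable_const 1).indicator (hk (measurableSet_singleton i))

theorem ae_sum_enorm_centeredCondExp_indicator_le_varpi_top (hH : H ≤ mΩ)
    (hk : Measurable[H] k) :
    ∀ᵐ ω ∂P, ∑ i, ‖centeredCondExp G P ((k ⁻¹' {i}).indicator fun _ => 1) ω‖ₑ
      ≤ varpi P G H ⊤ ⊤ := by
  set μ := fun i => centeredCondExp G P ((k ⁻¹' {i}).indicator fun _ => 1)
  have hsigns : ∀ᵐ ω ∂P, ∀ ε : ι → SignType, ‖∑ i, (ε i : ℝ) * μ i ω‖ₑ ≤ varpi P G H ⊤ ⊤ := by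
    refine ae_all_iff.2 fun ε => ?_
    have hbound : ∀ ω, ‖((fun i => (ε i : ℝ)) ∘ k) ω‖ ≤ 1 := fun ω => by
      change ‖(ε (k ω) : ℝ)‖ ≤ 1
      cases ε (k ω) <;> simp
    filter_upwards [ae_enorm_centeredCondExp_le_varpi_top (G := G)
        ((measurable_of_finite _).comp hk) hbound,
      centeredCondExp_comp_ae_eq_sum (hk.mono hH le_rfl) fun i => (ε i : ℝ)] with ω hle heq
    rw [heq, Finset.sum_apply] at hle
    simpa using hle
  filter_upwards [hsigns] with ω hω
  calc ∑ i, ‖μ i ω‖ₑ = ‖∑ i, (SignType.sign (μ i ω) : ℝ) * μ i ω‖ₑ := by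
        simp_rw [sign_mul_self, Real.enorm_eq_ofReal_abs]
        rw [abs_of_nonneg (Finset.sum_nonneg fun i _ => abs_nonneg _),
          ENNReal.ofReal_sum_of_nonneg fun i _ => abs_nonneg _]
    _ ≤ varpi P G H ⊤ ⊤ := hω _

theorem lintegral_rpow_enorm_centeredCondExp_comp_le (hH : H ≤ mΩ) (hk : Measurable[H] k)
    (c : ι → ℝ) {r : ℝ} (hr : 1 ≤ r) :
    ∫⁻ ω, ‖centeredCondExp G P (c ∘ k) ω‖ₑ ^ r ∂P
      ≤ 2 * varpi P G H ⊤ ⊤ ^ (r - 1) * ∫⁻ ω, ‖c (k ω)‖ₑ ^ r ∂P := by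
  set μ := fun i => centeredCondExp G P ((k ⁻¹' {i}).indicator fun _ => 1)
  set Φ := varpi P G H ⊤ ⊤
  have hk' : Measurable k := hk.mono hH le_rfl
  have hμ : ∀ i, AEMeasurable (fun ω => ‖μ i ω‖ₑ) P := fun i =>
    (aestronglyMeasurable_centeredCondExp _).enorm
  have hpointwise : ∀ᵐ ω ∂P,
      ‖centeredCondExp G P (c ∘ k) ω‖ₑ ^ r ≤ Φ ^ (r - 1) * ∑ i, ‖μ i ω‖ₑ * ‖c i‖ₑ ^ r := by
    filter_upwards [centeredCondExp_comp_ae_eq_sum hk' c,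
      ae_sum_enorm_centeredCondExp_indicator_le_varpi_top hH hk] with ω heq hsum
    calc ‖centeredCondExp G P (c ∘ k) ω‖ₑ ^ r = ‖∑ i, c i * μ i ω‖ₑ ^ r := by
          rw [heq, Finset.sum_apply]
          simp only [Pi.smul_apply, smul_eq_mul, μ]
      _ ≤ (∑ i, ‖μ i ω‖ₑ * ‖c i‖ₑ) ^ r := by
          gcongr
          refine (enorm_sum_le _ _).trans_eq ?_
          simp only [enorm_mul, mul_comm]
      _ ≤ (∑ i, ‖μ i ω‖ₑ) ^ (r - 1) * ∑ i, ‖μ i ω‖ₑ * ‖c i‖ₑ ^ r :=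
          ENNReal.rpow_sum_mul_le _ _ _ hr
      _ ≤ Φ ^ (r - 1) * ∑ i, ‖μ i ω‖ₑ * ‖c i‖ₑ ^ r := by
          gcongr
  calc ∫⁻ ω, ‖centeredCondExp G P (c ∘ k) ω‖ₑ ^ r ∂P
      ≤ ∫⁻ ω, Φ ^ (r - 1) * ∑ i, ‖μ i ω‖ₑ * ‖c i‖ₑ ^ r ∂P := lintegral_mono_ae hpointwise
    _ = Φ ^ (r - 1) * ∑ i, (∫⁻ ω, ‖μ i ω‖ₑ ∂P) * ‖c i‖ₑ ^ r := by
        rw [lintegral_const_mul'' _ (Finset.aemeasurable_fun_sum _ fun i _ => (hμ i).mul_const _),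
          lintegral_finsetSum' _ fun i _ => (hμ i).mul_const _]
        simp_rw [lintegral_mul_const'' _ (hμ _)]
    _ ≤ Φ ^ (r - 1) * ∑ i, 2 * P (k ⁻¹' {i}) * ‖c i‖ₑ ^ r := by
        gcongr with i
        exact lintegral_enorm_centeredCondExp_indicator_le (hk' (measurableSet_singleton i))
    _ = 2 * Φ ^ (r - 1) * ∫⁻ ω, ‖c (k ω)‖ₑ ^ r ∂P := by
        rw [lintegral_comp_eq_sum (f := fun i => ‖c i‖ₑ ^ r) hk', Finset.mul_sum, Finset.mul_sum]
        refine Finset.sum_congr rfl fun i _ => ?_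
        ring

theorem eLpNorm_centeredCondExp_comp_le (hH : H ≤ mΩ) (hk : Measurable[H] k) (c : ι → ℝ)
    {p : ℝ≥0∞} (hp : 1 ≤ p) (hp_top : p ≠ ∞) :
    eLpNorm (centeredCondExp G P (c ∘ k)) p P
      ≤ 2 ^ p⁻¹.toReal * varpi P G H ⊤ ⊤ ^ (1 - p⁻¹.toReal) * eLpNorm (c ∘ k) p P := by
  have hp0 : p ≠ 0 := (zero_lt_one.trans_le hp).ne'
  have hr : 1 ≤ p.toReal := by simpa using ENNReal.toReal_mono hp_top hp
  have hr0 : 0 < p.toReal := by linarith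
  rw [eLpNorm_eq_lintegral_rpow_enorm_toReal hp0 hp_top,
    eLpNorm_eq_lintegral_rpow_enorm_toReal hp0 hp_top, ENNReal.toReal_inv, ← one_div]
  calc (∫⁻ ω, ‖centeredCondExp G P (c ∘ k) ω‖ₑ ^ p.toReal ∂P) ^ (1 / p.toReal)
      ≤ (2 * varpi P G H ⊤ ⊤ ^ (p.toReal - 1) * ∫⁻ ω, ‖c (k ω)‖ₑ ^ p.toReal ∂P)
          ^ (1 / p.toReal) := by
        gcongr
        exact lintegral_rpow_enorm_centeredCondExp_comp_le hH hk c hr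
    _ = _ := by
        rw [ENNReal.mul_rpow_of_nonneg _ _ (by positivity),
          ENNReal.mul_rpow_of_nonneg _ _ (by positivity), ← ENNReal.rpow_mul]
        congr 3
        field_simp

end FiniteValued

section LpBound

variable {Ω : Type*} {G H mΩ : MeasurableSpace Ω} {P : Measure Ω} [IsProbabilityMeasure P]

theorem eLpNorm_centeredCondExp_simpleFunc_le (hH : H ≤ mΩ) (s : @SimpleFunc Ω H ℝ)
    {p : ℝ≥0∞} (hp : 1 ≤ p) (hp_top : p ≠ ∞) :
    eLpNorm (centeredCondExp G P s) p P
      ≤ 2 ^ p⁻¹.toReal * varpi P G H ⊤ ⊤ ^ (1 - p⁻¹.toReal) * eLpNorm s p P :=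
  eLpNorm_centeredCondExp_comp_le
    (k := fun ω => (⟨s ω, @SimpleFunc.mem_range_self _ _ H s ω⟩ : @SimpleFunc.range _ _ H s)) hH
    (@SimpleFunc.measurable _ _ H _ s).subtype_mk Subtype.val hp hp_top

theorem eLpNorm_centeredCondExp_le_of_forall_simpleFunc (hH : H ≤ mΩ) {p : ℝ≥0∞} (hp : 1 ≤ p)
    (hp_top : p ≠ ∞) {K : ℝ≥0∞}
    (hK : ∀ s : @SimpleFunc Ω H ℝ, eLpNorm (centeredCondExp G P s) p P ≤ K * eLpNorm s p P)
    {g : Ω → ℝ} (hg : Measurable[H] g) (hg1 : eLpNorm g p P ≤ 1) :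
    eLpNorm (centeredCondExp G P g) p P ≤ K := by
  have hg_int : Integrable g P := MemLp.integrable hp
    ⟨(hg.mono hH le_rfl).aestronglyMeasurable, hg1.trans_lt ENNReal.one_lt_top⟩
  have hbound : ∀ n : ℕ,
      eLpNorm (centeredCondExp G P g) p P ≤ K * (1 + (n : ℝ≥0∞)⁻¹) + 2 * (n : ℝ≥0∞)⁻¹ := by
    intro n
    obtain ⟨s, hs⟩ := exists_simpleFunc_eLpNorm_sub_le hH hp_top hg.stronglyMeasurable
      (hg1.trans_lt ENNReal.one_lt_top) (ENNReal.inv_ne_zero.2 (ENNReal.natCast_ne_top n))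
    have hs_int : Integrable s P :=
      integrable_of_integrable_trim hH (@SimpleFunc.integrable_of_isFiniteMeasure _ _ H _ _ _ s)
    have hs_norm : eLpNorm s p P ≤ 1 + (n : ℝ≥0∞)⁻¹ := calc
      eLpNorm s p P = eLpNorm (g - (g - ⇑s)) p P := by rw [sub_sub_cancel]
      _ ≤ eLpNorm g p P + eLpNorm (g - ⇑s) p P :=
          eLpNorm_sub_le hg_int.aestronglyMeasurable (hg_int.sub hs_int).aestronglyMeasurable hp
      _ ≤ 1 + (n : ℝ≥0∞)⁻¹ := add_le_add hg1 hs
    calc eLpNorm (centeredCondExp G P g) p P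
        ≤ eLpNorm (centeredCondExp G P s) p P + 2 * eLpNorm (g - ⇑s) p P :=
          eLpNorm_centeredCondExp_le_add_two_mul_eLpNorm_sub hp hg_int hs_int
      _ ≤ K * (1 + (n : ℝ≥0∞)⁻¹) + 2 * (n : ℝ≥0∞)⁻¹ := by
          gcongr
          exact (hK s).trans (by gcongr)
  have hlim : Tendsto (fun n : ℕ => K * (1 + (n : ℝ≥0∞)⁻¹) + 2 * (n : ℝ≥0∞)⁻¹) atTop (𝓝 K) := by
    have h0 := ENNReal.tendsto_inv_nat_nhds_zero
    have h1 := ENNReal.Tendsto.const_mul (a := K) (tendsto_const_nhds (x := 1).add h0)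
      (Or.inl (by simp))
    have h2 := ENNReal.Tendsto.const_mul (a := 2) h0 (Or.inr ENNReal.ofNat_ne_top)
    simpa using h1.add h2
  exact ge_of_tendsto' hlim hbound

theorem varpi_le_rpow_mul_varpi_top (hH : H ≤ mΩ) {p : ℝ≥0∞} (hp : 1 ≤ p) :
    varpi P G H p p ≤ 2 ^ p⁻¹.toReal * varpi P G H ⊤ ⊤ ^ (1 - p⁻¹.toReal) := by
  rcases eq_or_ne p ⊤ with rfl | hp_top
  · simp
  exact iSup_le fun g => eLpNorm_centeredCondExp_le_of_forall_simpleFunc hH hp hp_top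
    (fun s => eLpNorm_centeredCondExp_simpleFunc_le hH s hp hp_top) g.2.1 g.2.2

end LpBound

theorem varpi_le_phi_general
    {Ω : Type*} {mΩ : MeasurableSpace Ω} (P : Measure Ω) [IsProbabilityMeasure P]
    (G H : MeasurableSpace Ω) (hH : H ≤ mΩ)
    (p q : ℝ≥0∞) (hp : 1 ≤ p) (hpq : p ≤ q) :
    varpi P G H q p ≤
      (2 : ℝ≥0∞) ^ (1 + p⁻¹.toReal) * phiMix P G H ^ (1 - p⁻¹.toReal) := by
  set a := p⁻¹.toReal
  have ha0 : 0 ≤ a := ENNReal.toReal_nonneg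
  have ha : a ≤ 1 := by
    simpa [a] using ENNReal.toReal_mono ENNReal.one_ne_top (ENNReal.inv_le_one.2 hp)
  have hvarpi_top : varpi P G H ⊤ ⊤ = 2 * phiMix P G H := by
    rw [phiMix, ENNReal.mul_div_cancel two_ne_zero ENNReal.ofNat_ne_top]
  calc varpi P G H q p
      ≤ varpi P G H p p := varpi_le_varpi_of_exponent_le hH p hpq
    _ ≤ 2 ^ a * (2 * phiMix P G H) ^ (1 - a) := hvarpi_top ▸ varpi_le_rpow_mul_varpi_top hH hp
    _ = 2 ^ (a + (1 - a)) * phiMix P G H ^ (1 - a) := by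
        rw [ENNReal.mul_rpow_of_nonneg _ _ (by linarith),
          ENNReal.rpow_add _ _ two_ne_zero ENNReal.ofNat_ne_top, mul_assoc]
    _ ≤ 2 ^ (1 + a) * phiMix P G H ^ (1 - a) := by
        rw [add_sub_cancel]
        gcongr
        exacts [one_le_two, by linarith]

/-- Bound of `ϖ_{q,p}` via the `φ`-mixing coefficient. -/
theorem varpi_le_phi
    {Ω : Type*} {mΩ : MeasurableSpace Ω} (P : Measure Ω) [IsProbabilityMeasure P]
    (G H : MeasurableSpace Ω) (hG : G ≤ mΩ) (hH : H ≤ mΩ)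
    (p q : ℝ≥0∞) (hp : 1 ≤ p) (hpq : p ≤ q) :
    varpi P G H q p ≤
      (2 : ℝ≥0∞) ^ (1 + p⁻¹.toReal) * phiMix P G H ^ (1 - p⁻¹.toReal) :=
  varpi_le_phi_general P G H hH p q hp hpq
end
end

section
/- Upper bound on the number of big blocks (estimate (3.16)): with the block construction below, there exists t₀ ≥ 1 such that for all real t ≥ t₀, ν(t) ≤ ((1+τ)⌊t⌋)^{1/(1+τ)} ≤ 2⌊t⌋^{1/(1+τ)}. -/
open Filter Set
open scoped Topology

noncomputable section

/-- The right endpoints `b(j)` of the big blocks: `b(1) = 1` and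
`b(j+1) = b(j) + ⌊j^θ⌋ + ⌊(j+1)^τ⌋` (coming from `a(j+1) = b(j) + ⌊j^θ⌋` and
`b(j+1) = a(j+1) + ⌊(j+1)^τ⌋`). -/
def bBlk (θ τ : ℝ) : ℕ → ℕ
  | 0 => 0
  | 1 => 1
  | (j + 2) => bBlk θ τ (j + 1) + ⌊((j + 1 : ℕ) : ℝ) ^ θ⌋₊ + ⌊((j + 2 : ℕ) : ℝ) ^ τ⌋₊

/-- The left endpoints `a(j)` of the big blocks: `a(1) = 0` and
`a(j) = b(j-1) + ⌊(j-1)^θ⌋` for `j > 1`. -/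
def aBlk (θ τ : ℝ) (j : ℕ) : ℕ :=
  if j ≤ 1 then 0 else bBlk θ τ (j - 1) + ⌊((j - 1 : ℕ) : ℝ) ^ θ⌋₊

/-- `ν(t) = max{j ≥ 1 : b(j) + ⌊j^θ⌋ ≤ t + 1}`, the number of full pairs of blocks in `[1,t]`. -/
def nuBlk (θ τ : ℝ) (t : ℝ) : ℕ :=
  sSup {j : ℕ | 1 ≤ j ∧ ((bBlk θ τ j + ⌊(j : ℝ) ^ θ⌋₊ : ℕ) : ℝ) ≤ t + 1}
lemma bernoulli_step (τ : ℝ) (hτ0 : 0 < τ) {n : ℝ} (hn : 1 ≤ n) :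
    n ^ (1 + τ) - (n - 1) ^ (1 + τ) ≤ (1 + τ) * n ^ τ := by
  have hn0 : 0 < n := lt_of_lt_of_le one_pos hn
  have hs : -1 ≤ -(1 / n) := by
    rw [neg_le_neg_iff]
    exact div_le_one_of_le₀ hn (le_of_lt hn0)
  have hp : (1 : ℝ) ≤ 1 + τ := by linarith
  have hB := one_add_mul_self_le_rpow_one_add hs hp
  have h1 : (0:ℝ) ≤ 1 + -(1 / n) := by
    have := div_le_one_of_le₀ hn (le_of_lt hn0)
    linarith
  have hmul : (1 + -(1 / n)) ^ (1 + τ) * n ^ (1 + τ) = (n - 1) ^ (1 + τ) := by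
    rw [← Real.mul_rpow h1 (le_of_lt hn0)]
    congr 1
    field_simp
    ring
  have hnpow : n ^ (1 + τ) = n * n ^ τ := by
    rw [Real.rpow_add hn0, Real.rpow_one]
  have hmono : (1 + (1 + τ) * -(1 / n)) * n ^ (1 + τ) ≤ (1 + -(1 / n)) ^ (1 + τ) * n ^ (1 + τ) :=
    mul_le_mul_of_nonneg_right hB (Real.rpow_nonneg (le_of_lt hn0) _)
  rw [hmul] at hmono
  have hexp : (1 + (1 + τ) * -(1 / n)) * n ^ (1 + τ) = n ^ (1 + τ) - (1 + τ) * n ^ τ := by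
    rw [hnpow]; field_simp; ring
  rw [hexp] at hmono
  linarith

lemma bBlk_lower (θ τ : ℝ) (hθ : 0 < θ) (hτ0 : 0 < τ) :
    ∀ j : ℕ, 1 ≤ j → ((j : ℝ) ^ (1 + τ) - 1) / (1 + τ) + 1 ≤ (bBlk θ τ j : ℝ) := by
  have hτ1 : (0:ℝ) < 1 + τ := by linarith
  intro j hj
  induction j, hj using Nat.le_induction with
  | base =>
    simp [bBlk, Real.one_rpow]
  | succ k hk ih =>
    obtain ⟨m, rfl⟩ : ∃ m, k = m + 1 := ⟨k - 1, (Nat.succ_pred_eq_of_pos hk).symm⟩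
    have hb : bBlk θ τ (m + 1 + 1) =
        bBlk θ τ (m + 1) + ⌊((m + 1 : ℕ) : ℝ) ^ θ⌋₊ + ⌊((m + 2 : ℕ) : ℝ) ^ τ⌋₊ := rfl
    have hfloorθ : (1 : ℕ) ≤ ⌊((m + 1 : ℕ) : ℝ) ^ θ⌋₊ := by
      rw [Nat.le_floor_iff (Real.rpow_nonneg (by positivity) _)]
      push_cast
      exact Real.one_le_rpow (by push_cast; linarith) (le_of_lt hθ)
    have hfloorτ : ((m + 2 : ℕ) : ℝ) ^ τ - 1 ≤ (⌊((m + 2 : ℕ) : ℝ) ^ τ⌋₊ : ℕ) := by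
      have := Nat.lt_floor_add_one (((m + 2 : ℕ) : ℝ) ^ τ)
      push_cast at this ⊢
      linarith
    have hn : (1:ℝ) ≤ ((m + 2 : ℕ) : ℝ) := by push_cast; linarith
    have hstep := bernoulli_step τ hτ0 hn
    have hsub : ((m + 2 : ℕ) : ℝ) - 1 = ((m + 1 : ℕ) : ℝ) := by push_cast; ring
    rw [hsub] at hstep
    rw [hb]
    push_cast
    have e : ((m:ℝ) + 1 + 1) = ((m:ℝ) + 2) := by ring
    rw [e]
    push_cast at ih hfloorθ hfloorτ
    have : ((m:ℝ) + 2) ^ (1 + τ) - ((m:ℝ) + 1) ^ (1 + τ) ≤ (1 + τ) * ((m:ℝ) + 2) ^ τ := by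
      convert hstep using 3 <;> push_cast <;> ring
    have hfθR : (1:ℝ) ≤ (⌊((m:ℝ) + 1) ^ θ⌋₊ : ℝ) := by exact_mod_cast hfloorθ
    rw [div_add' _ _ _ (ne_of_gt hτ1), div_le_iff₀ hτ1] at ih ⊢
    have h4 : (((m:ℝ) + 2) ^ τ - 1) * (1 + τ) ≤ (⌊((m:ℝ) + 2) ^ τ⌋₊ : ℝ) * (1 + τ) :=
      mul_le_mul_of_nonneg_right hfloorτ (le_of_lt hτ1)
    have h5 : (1:ℝ) * (1 + τ) ≤ (⌊((m:ℝ) + 1) ^ θ⌋₊ : ℝ) * (1 + τ) :=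
      mul_le_mul_of_nonneg_right hfθR (le_of_lt hτ1)
    nlinarith

/-- Upper bound (3.16) on the number of big blocks:
`ν(t) ≤ ((1+τ)⌊t⌋)^{1/(1+τ)} ≤ 2⌊t⌋^{1/(1+τ)}`. -/
theorem nuBlk_upper_bound (θ τ : ℝ) (hθ : 0 < θ) (hθτ : θ < τ) (hτ : τ < 1 / 2) :
    ∃ t₀ : ℝ, 1 ≤ t₀ ∧ ∀ t : ℝ, t₀ ≤ t →
      (nuBlk θ τ t : ℝ) ≤ ((1 + τ) * ⌊t⌋₊) ^ (1 / (1 + τ)) ∧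
      ((1 + τ) * ⌊t⌋₊) ^ (1 / (1 + τ)) ≤ 2 * (⌊t⌋₊ : ℝ) ^ (1 / (1 + τ)) := by
  have hτ0 : 0 < τ := lt_trans hθ hθτ
  have hτ1 : (0:ℝ) < 1 + τ := by linarith
  refine ⟨1, le_refl 1, fun t ht => ?_⟩
  have ht0 : (0:ℝ) ≤ t := by linarith
  have hft : 1 ≤ ⌊t⌋₊ := Nat.le_floor (by exact_mod_cast ht)
  have hftR : (1:ℝ) ≤ (⌊t⌋₊ : ℝ) := by exact_mod_cast hft
  set B : ℝ := ((1 + τ) * ⌊t⌋₊) ^ (1 / (1 + τ)) with hB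
  have hBnn : 0 ≤ B := Real.rpow_nonneg (by positivity) _
  constructor
  · -- main bound
    have key : ∀ j ∈ {j : ℕ | 1 ≤ j ∧ ((bBlk θ τ j + ⌊(j : ℝ) ^ θ⌋₊ : ℕ) : ℝ) ≤ t + 1},
        j ≤ ⌊B⌋₊ := by
      rintro j ⟨hj1, hj2⟩
      -- the nat bBlk θ τ j + ⌊j^θ⌋₊ ≤ ⌊t⌋₊ + 1
      have hnat : bBlk θ τ j + ⌊(j : ℝ) ^ θ⌋₊ ≤ ⌊t⌋₊ + 1 := by
        have := Nat.le_floor (α := ℝ) (by exact_mod_cast hj2)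
        calc bBlk θ τ j + ⌊(j : ℝ) ^ θ⌋₊ ≤ ⌊t + 1⌋₊ := this
          _ = ⌊t⌋₊ + 1 := by
              rw [← Nat.floor_add_one ht0]
      have hfθ : 1 ≤ ⌊(j : ℝ) ^ θ⌋₊ := by
        rw [Nat.le_floor_iff (Real.rpow_nonneg (by positivity) _)]
        exact_mod_cast Real.one_le_rpow (by exact_mod_cast hj1) (le_of_lt hθ)
      have hble : bBlk θ τ j ≤ ⌊t⌋₊ := by omega
      have hbR : (bBlk θ τ j : ℝ) ≤ (⌊t⌋₊ : ℝ) := by exact_mod_cast hble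
      have hlow := bBlk_lower θ τ hθ hτ0 j hj1
      have hpow : (j : ℝ) ^ (1 + τ) ≤ (1 + τ) * ⌊t⌋₊ := by
        rw [div_add' _ _ _ (ne_of_gt hτ1), div_le_iff₀ hτ1] at hlow
        nlinarith
      have hjR : (j : ℝ) ≤ B := by
        have h1 : ((j : ℝ) ^ (1 + τ)) ^ (1 / (1 + τ)) = (j : ℝ) := by
          rw [one_div]
          exact Real.rpow_rpow_inv (by positivity) (ne_of_gt hτ1)
        rw [← h1, hB]
        exact Real.rpow_le_rpow (Real.rpow_nonneg (by positivity) _) hpow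
          (by positivity)
      exact Nat.le_floor hjR
    have hnu : nuBlk θ τ t ≤ ⌊B⌋₊ := csSup_le' key
    calc (nuBlk θ τ t : ℝ) ≤ (⌊B⌋₊ : ℝ) := by exact_mod_cast hnu
      _ ≤ B := Nat.floor_le hBnn
  · -- second bound
    have h2 : ((1 + τ) * (⌊t⌋₊:ℝ)) ^ (1 / (1 + τ))
        = (1 + τ) ^ (1 / (1 + τ)) * (⌊t⌋₊:ℝ) ^ (1 / (1 + τ)) :=
      Real.mul_rpow (by positivity) (by positivity)
    rw [hB, h2]
    have h3 : (1 + τ) ^ (1 / (1 + τ)) ≤ 2 := by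
      calc (1 + τ) ^ (1 / (1 + τ)) ≤ (1 + τ) ^ (1:ℝ) :=
            Real.rpow_le_rpow_of_exponent_le (by linarith)
              (by rw [div_le_one hτ1]; linarith)
        _ = 1 + τ := Real.rpow_one _
        _ ≤ 2 := by linarith
    exact mul_le_mul_of_nonneg_right h3 (Real.rpow_nonneg (by positivity) _)
end
end

section
/- Lower bound on the number of big blocks (estimate (3.19)): with the block construction below, there exists t₀ ≥ 1 such that for all real t ≥ t₀, ν(t) ≥ (τt/2)^{1/(1+τ)} − 1. -/
open Filter Set
open scoped Topology

noncomputable section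

lemma bBlk_ge (θ τ : ℝ) (hτ : 0 ≤ τ) (j : ℕ) (hj : 1 ≤ j) : j ≤ bBlk θ τ j := by
  induction j, hj using Nat.le_induction with
  | base => simp [bBlk]
  | succ n hn ih =>
    obtain ⟨m, rfl⟩ : ∃ m, n = m + 1 := ⟨n - 1, by omega⟩
    have h1 : 1 ≤ ⌊((m + 2 : ℕ) : ℝ) ^ τ⌋₊ := by
      apply Nat.le_floor
      push_cast
      calc (1:ℝ) = 1 ^ τ := (Real.one_rpow τ).symm
        _ ≤ ((m:ℝ) + 2) ^ τ := Real.rpow_le_rpow (by norm_num) (by linarith) hτ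
    show m + 2 ≤ bBlk θ τ (m + 2)
    simp only [bBlk]
    omega

lemma bBlk_upper (θ τ : ℝ) (hθ : 0 ≤ θ) (hθτ : θ ≤ τ) (j : ℕ) (hj : 1 ≤ j) :
    ((bBlk θ τ j + ⌊(j : ℝ) ^ θ⌋₊ : ℕ) : ℝ) ≤ 1 + 2 * j * (j : ℝ) ^ τ := by
  induction j, hj using Nat.le_induction with
  | base =>
    simp [bBlk, Real.one_rpow]
  | succ n hn ih =>
    obtain ⟨m, rfl⟩ : ∃ m, n = m + 1 := ⟨n - 1, by omega⟩
    have hb : bBlk θ τ (m + 2) = bBlk θ τ (m + 1) + ⌊((m + 1 : ℕ) : ℝ) ^ θ⌋₊ + ⌊((m + 2 : ℕ) : ℝ) ^ τ⌋₊ := rfl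
    have hfτ : (⌊((m + 2 : ℕ) : ℝ) ^ τ⌋₊ : ℝ) ≤ ((m + 2 : ℕ) : ℝ) ^ τ :=
      Nat.floor_le (Real.rpow_nonneg (by positivity) _)
    have hfθ : (⌊((m + 2 : ℕ) : ℝ) ^ θ⌋₊ : ℝ) ≤ ((m + 2 : ℕ) : ℝ) ^ τ := by
      refine le_trans (Nat.floor_le (Real.rpow_nonneg (by positivity) _)) ?_
      exact Real.rpow_le_rpow_of_exponent_le (by push_cast; linarith) hθτ
    have hmono : ((m + 1 : ℕ) : ℝ) ^ τ ≤ ((m + 2 : ℕ) : ℝ) ^ τ := by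
      apply Real.rpow_le_rpow (by positivity) _ (le_trans hθ hθτ)
      push_cast; linarith
    have key : ((bBlk θ τ (m + 1) + ⌊((m + 1 : ℕ) : ℝ) ^ θ⌋₊ : ℕ) : ℝ)
        ≤ 1 + 2 * (m + 1 : ℕ) * ((m + 1 : ℕ) : ℝ) ^ τ := ih
    have : ((bBlk θ τ (m + 2) + ⌊((m + 2 : ℕ) : ℝ) ^ θ⌋₊ : ℕ) : ℝ)
        = ((bBlk θ τ (m + 1) + ⌊((m + 1 : ℕ) : ℝ) ^ θ⌋₊ : ℕ) : ℝ)
          + (⌊((m + 2 : ℕ) : ℝ) ^ τ⌋₊ : ℝ) + (⌊((m + 2 : ℕ) : ℝ) ^ θ⌋₊ : ℝ) := by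
      rw [hb]; push_cast; ring
    rw [this]
    have h2 : 2 * ((m + 1 : ℕ) : ℝ) * ((m + 1 : ℕ) : ℝ) ^ τ
        ≤ 2 * ((m + 1 : ℕ) : ℝ) * ((m + 2 : ℕ) : ℝ) ^ τ := by
      apply mul_le_mul_of_nonneg_left hmono (by positivity)
    push_cast at key hfτ hfθ h2 ⊢
    rw [show ((m:ℝ) + 1 + 1) = (m:ℝ) + 2 from by ring]
    nlinarith [key, hfτ, hfθ, h2]

/-- Lower bound (3.19) on the number of big blocks: `ν(t) ≥ (τt/2)^{1/(1+τ)} - 1`. -/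
theorem nuBlk_lower_bound (θ τ : ℝ) (hθ : 0 < θ) (hθτ : θ < τ) (hτ : τ < 1 / 2) :
    ∃ t₀ : ℝ, 1 ≤ t₀ ∧ ∀ t : ℝ, t₀ ≤ t →
      (τ * t / 2) ^ (1 / (1 + τ)) - 1 ≤ (nuBlk θ τ t : ℝ) := by
  have hτ0 : 0 < τ := lt_trans hθ hθτ
  have h1τ : (0:ℝ) < 1 + τ := by linarith
  set p := 1 / (1 + τ) with hp
  have hp0 : 0 < p := by positivity
  refine ⟨2, by norm_num, fun t ht => ?_⟩
  have ht0 : (0:ℝ) < t := by linarith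
  have ht2 : (1:ℝ) ≤ t / 2 := by linarith
  set n := ⌊(t / 2) ^ p⌋₊ with hn
  have hx1 : (1:ℝ) ≤ (t / 2) ^ p := by
    calc (1:ℝ) = 1 ^ p := (Real.one_rpow p).symm
      _ ≤ (t / 2) ^ p := Real.rpow_le_rpow (by norm_num) ht2 hp0.le
  have hn1 : 1 ≤ n := Nat.le_floor (by exact_mod_cast hx1)
  have hnle : (n : ℝ) ≤ (t / 2) ^ p := Nat.floor_le (by positivity)
  -- n^(1+τ) ≤ t/2
  have hkey : (n : ℝ) ^ (1 + τ) ≤ t / 2 := by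
    have h := Real.rpow_le_rpow (by positivity : (0:ℝ) ≤ (n:ℝ)) hnle h1τ.le
    have heq : ((t / 2) ^ p) ^ (1 + τ) = t / 2 := by
      rw [← Real.rpow_mul (by positivity : (0:ℝ) ≤ t / 2)]
      rw [hp, one_div, inv_mul_cancel₀ (by linarith : (1:ℝ) + τ ≠ 0), Real.rpow_one]
    rwa [heq] at h
  -- membership of n in the defining set
  have hrw : (n : ℝ) * (n : ℝ) ^ τ = (n : ℝ) ^ (1 + τ) := by
    rw [Real.rpow_add (by exact_mod_cast hn1 : (0:ℝ) < (n:ℝ)), Real.rpow_one]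
  have hmem : n ∈ {j : ℕ | 1 ≤ j ∧ ((bBlk θ τ j + ⌊(j : ℝ) ^ θ⌋₊ : ℕ) : ℝ) ≤ t + 1} := by
    refine ⟨hn1, ?_⟩
    calc ((bBlk θ τ n + ⌊(n : ℝ) ^ θ⌋₊ : ℕ) : ℝ)
        ≤ 1 + 2 * n * (n : ℝ) ^ τ := bBlk_upper θ τ hθ.le hθτ.le n hn1
      _ = 1 + 2 * ((n : ℝ) ^ (1 + τ)) := by rw [mul_assoc, hrw]
      _ ≤ 1 + 2 * (t / 2) := by linarith
      _ ≤ t + 1 := by linarith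
  have hbdd : BddAbove {j : ℕ | 1 ≤ j ∧ ((bBlk θ τ j + ⌊(j : ℝ) ^ θ⌋₊ : ℕ) : ℝ) ≤ t + 1} := by
    refine ⟨⌊t + 1⌋₊, fun j hj => ?_⟩
    have h1 : (j : ℝ) ≤ t + 1 := by
      have h2 : j ≤ bBlk θ τ j + ⌊(j : ℝ) ^ θ⌋₊ :=
        le_trans (bBlk_ge θ τ hτ0.le j hj.1) (Nat.le_add_right _ _)
      exact le_trans (by exact_mod_cast h2) hj.2
    exact Nat.le_floor h1
  have hnu : n ≤ nuBlk θ τ t := le_csSup hbdd hmem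
  -- final arithmetic
  have hcmp : (τ * t / 2) ^ p ≤ (t / 2) ^ p := by
    apply Real.rpow_le_rpow (by positivity) _ hp0.le
    have : τ * t ≤ 1 * t := mul_le_mul_of_nonneg_right (by linarith) ht0.le
    linarith
  have hfl : (t / 2) ^ p - 1 < (n : ℝ) := Nat.sub_one_lt_floor _
  have : (n : ℝ) ≤ (nuBlk θ τ t : ℝ) := by exact_mod_cast hnu
  linarith
end
end

section
/- Equivalence of the separation conditions (2.9) and (2.10): let δ > 0 and let q, q' : ℕ → ℕ be increasing functions with q'(n+1) − q'(n) ≥ n^δ for all n ≥ 2. If liminf_{n→∞}(q'(⌊εn⌋) − q(n)) > 0 for every ε > 0, then liminf_{n→∞}(q'(⌊εn⌋) − q(n)) = ∞ for every ε > 0. -/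
open Filter Set
open scoped Topology

/-- Equivalence of the separation conditions (2.9) and (2.10): if consecutive increments of
`q'` grow at least like `n^δ` and `liminf (q'(⌊εn⌋) - q(n)) > 0` for every `ε > 0`, then in
fact `q'(⌊εn⌋) - q(n) → ∞` for every `ε > 0`. -/
theorem separation_conditions_equivalent
    (δ : ℝ) (hδ : 0 < δ) (q q' : ℕ → ℕ)
    (hq : StrictMono q) (hq' : StrictMono q')
    (hgrow : ∀ n : ℕ, 2 ≤ n → (n : ℝ) ^ δ ≤ (q' (n + 1) : ℝ) - q' n)
    (hlim : ∀ ε : ℝ, 0 < ε →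
      ∃ c : ℝ, 0 < c ∧ ∀ᶠ n : ℕ in atTop, c ≤ (q' ⌊ε * n⌋₊ : ℝ) - q n) :
    ∀ ε : ℝ, 0 < ε →
      Tendsto (fun n : ℕ => (q' ⌊ε * n⌋₊ : ℝ) - q n) atTop atTop := by
  intro ε hε
  obtain ⟨c, hc, hev⟩ := hlim (ε / 2) (by positivity)
  have hfloor : Tendsto (fun n : ℕ => (⌊ε / 2 * n⌋₊ : ℝ)) atTop atTop := by
    have h1 : Tendsto (fun n : ℕ => ε / 2 * n) atTop atTop :=
      Tendsto.const_mul_atTop (by positivity) tendsto_natCast_atTop_atTop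
    exact tendsto_natCast_atTop_atTop.comp (tendsto_nat_floor_atTop.comp h1)
  have hbound : Tendsto (fun n : ℕ => c + (⌊ε / 2 * n⌋₊ : ℝ) ^ δ) atTop atTop :=
    tendsto_atTop_add_const_left _ c ((tendsto_rpow_atTop hδ).comp hfloor)
  apply tendsto_atTop_mono' _ _ hbound
  have hn2 : ∀ᶠ n : ℕ in atTop, (2 : ℝ) ≤ ε / 2 * n := by
    have h1 : Tendsto (fun n : ℕ => ε / 2 * n) atTop atTop :=
      Tendsto.const_mul_atTop (by positivity) tendsto_natCast_atTop_atTop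
    exact h1.eventually_ge_atTop 2
  filter_upwards [hev, hn2] with n h1 h2
  set m := ⌊ε / 2 * n⌋₊ with hm
  have hm2 : 2 ≤ m := Nat.le_floor h2
  have hmono : m + 1 ≤ ⌊ε * n⌋₊ := by
    have hle : ε / 2 * n + 1 ≤ ε * n := by nlinarith
    calc m + 1 = ⌊ε / 2 * n + 1⌋₊ := (Nat.floor_add_one (by nlinarith)).symm
      _ ≤ ⌊ε * n⌋₊ := Nat.floor_le_floor hle
  have hq'mono : (q' (m + 1) : ℝ) ≤ q' ⌊ε * n⌋₊ := by
    exact_mod_cast hq'.monotone hmono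
  have hg := hgrow m hm2
  linarith
end
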